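/- (AMDCT V discrete orthogonality) Let N, n ≥ 1 and let k, k' ∈ D_N^−, i.e., k = (k_1,…,k_n) and k' = (k'_1,…,k'_n) are integer vectors with N−1 ≥ k_1 > k_2 > … > k_n ≥ 0 and N−1 ≥ k'_1 > k'_2 > … > k'_n ≥ 0. Then Σ_{r ∈ D_N^−} (∏_{i=1}^n c_{r_i}) · cos⁻_k(2r_1/(2N−1), …, 2r_n/(2N−1)) · cos⁻_{k'}(2r_1/(2N−1), …, 2r_n/(2N−1)) = d_k^{−1} · ((2N−1)/4)^n · δ_{k,k'}. -/

import Mathlib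

open Real Finset

/-- The antisymmetric multivariate cosine function
`cos⁻_λ(x) = Σ_{σ ∈ S_n} sgn(σ) ∏_{i=1}^n cos(π λ_{σ(i)} x_i)`. -/
noncomputable def cosMinus (n : ℕ) (lam x : Fin n → ℝ) : ℝ :=
  ∑ σ : Equiv.Perm (Fin n),
    ((Equiv.Perm.sign σ : ℤ) : ℝ) * ∏ i : Fin n, Real.cos (Real.pi * lam (σ i) * x i)

/-- The coefficient `c_r`: `1/2` if `r = 0` or `r = N`, and `1` otherwise. -/
noncomputable def cc (N r : ℕ) : ℝ := if r = 0 ∨ r = N then 1 / 2 else 1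

/-!
`cos⁻_λ(x)` is the determinant of the matrix `(cos (π λ_a x_b))_{a,b}`. Hence, by the
Cauchy–Binet formula, the weighted sum over `r ∈ D_N^−` of `cos⁻_k · cos⁻_{k'}` at the nodes
`x_t = 2t/(2N-1)` is the determinant of the `n × n` Gram matrix
`G_{ij} = Σ_{t<N} c_t cos (π k_i x_t) cos (π k'_j x_t)`. The one-dimensional orthogonality of the
DCT-V (the half-weighted sum `Σ_{t<N} c_t cos (2πmt/(2N-1))` telescopes, like a Dirichlet
kernel, to `sin (πm) / (2 sin (πm/(2N-1)))`, which is `0` for `0 < |m| < 2N-1`) gives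
`G_{ij} = δ_{k_i,k'_j} c_{k_i}⁻¹ (2N-1)/4`. Such a matrix is diagonal when `k = k'` and has a zero
row otherwise, since a strictly decreasing tuple is determined by its set of values.
-/

open Function Equiv

theorem StrictAnti.perm_eq_one_of_comp {α : Type*} [LinearOrder α] {n : ℕ} {s : Fin n → α}
    (hs : StrictAnti s) {e : Perm (Fin n)} (hse : StrictAnti (s ∘ e)) : e = 1 := by
  have he : StrictMono e := fun a b hab => hs.lt_iff_gt.mp (hse hab)
  have : he.orderIsoOfSurjective e e.surjective = OrderIso.refl _ := Subsingleton.elim _ _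
  ext a
  exact congrArg (fun f : Fin n ≃o Fin n => (f a : ℕ)) this

theorem StrictAnti.eq_of_forall_exists_eq {α : Type*} [LinearOrder α] {n : ℕ} {k k' : Fin n → α}
    (hk : StrictAnti k) (hk' : StrictAnti k') (h : ∀ i, ∃ j, k i = k' j) : k = k' := by
  choose e he using h
  have he_inj : Injective e := fun a b hab => hk.injective (by rw [he, he, hab])
  set σ := Equiv.ofBijective e (Finite.injective_iff_bijective.mp he_inj)
  have hkσ : k = k' ∘ σ := funext he
  have hσ : σ = 1 := hk'.perm_eq_one_of_comp (hkσ ▸ hk)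
  rw [hkσ, hσ, Perm.coe_one, comp_id]

theorem Function.Injective.exists_strictAnti_comp_perm {α : Type*} [LinearOrder α] {n : ℕ}
    {r : Fin n → α} (hr : Injective r) : ∃ σ : Perm (Fin n), StrictAnti (r ∘ σ) := by
  have hmono : StrictMono (r ∘ Tuple.sort r) :=
    (Tuple.monotone_sort r).strictMono_of_injective (hr.comp (Tuple.sort r).injective)
  exact ⟨Tuple.sort r * Fin.revPerm, fun a b hab => hmono (Fin.rev_lt_rev.mpr hab)⟩

theorem sum_eq_sum_strictAnti_sum_perm {α M : Type*} [LinearOrder α] [Fintype α]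
    [AddCommMonoid M] {n : ℕ} (f : (Fin n → α) → M) (hf : ∀ r, ¬ Injective r → f r = 0) :
    ∑ r, f r = ∑ s with StrictAnti s, ∑ e : Perm (Fin n), f (s ∘ e) := by
  classical
  rw [← sum_filter_of_ne (p := Injective) fun r _ => not_imp_comm.mp (hf r), ← sum_product']
  symm
  refine sum_bij (fun p _ => p.1 ∘ p.2) ?_ ?_ ?_ fun _ _ => rfl
  · rintro ⟨s, e⟩ hp
    simp only [mem_product, mem_filter_univ] at hp ⊢
    exact hp.1.injective.comp e.injective
  · rintro ⟨s, e⟩ hp ⟨s', e'⟩ hp' (h : s ∘ e = s' ∘ e')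
    simp only [mem_product, mem_filter_univ] at hp hp'
    have hs : s = s' ∘ (e' * e⁻¹) := by
      ext a; simpa [Perm.mul_apply] using congrFun h (e⁻¹ a)
    have he : e' * e⁻¹ = 1 := hp'.1.perm_eq_one_of_comp (hs ▸ hp.1)
    rw [he, Perm.coe_one, comp_id] at hs
    rw [hs, mul_inv_eq_one.mp he]
  · intro r hr
    obtain ⟨σ, hσ⟩ := (mem_filter.mp hr).2.exists_strictAnti_comp_perm
    exact ⟨(r ∘ σ, σ⁻¹), by simpa using hσ, by ext a; simp⟩

/-- Cauchy–Binet, with the `n`-element subsets of `α` listed as strictly decreasing tuples. -/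
theorem Matrix.det_mul_eq_sum_strictAnti {R α : Type*} [CommRing R] [Fintype α] [LinearOrder α]
    {n : ℕ} (A : Matrix (Fin n) α R) (B : Matrix α (Fin n) R) :
    (A * B).det = ∑ s with StrictAnti s, (A.submatrix id s).det * (B.submatrix s id).det := by
  calc (A * B).det = ∑ r : Fin n → α, (∏ i, B (r i) i) * (A.submatrix id r).det := by
        simp only [Matrix.det_apply', Matrix.mul_apply, prod_univ_sum, Fintype.piFinset_univ,
          Matrix.submatrix_apply, id, mul_sum, prod_mul_distrib]
        rw [sum_comm]
        refine sum_congr rfl fun r _ => sum_congr rfl fun σ _ => by ring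
    _ = ∑ s with StrictAnti s, ∑ e : Perm (Fin n),
          (∏ i, B (s (e i)) i) * ((A.submatrix id s).submatrix id e).det := by
        refine sum_eq_sum_strictAnti_sum_perm _ fun r hr => ?_
        obtain ⟨i, j, hij, hne⟩ := not_injective_iff.mp hr
        rw [Matrix.det_zero_of_column_eq hne fun k => by simp [hij], mul_zero]
    _ = _ := by
        refine sum_congr rfl fun s _ => ?_
        simp only [Matrix.det_permute', Matrix.det_apply' (B.submatrix s id), mul_sum]
        refine sum_congr rfl fun e _ => ?_
        simp only [Matrix.submatrix_apply, id]
        ring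

theorem Matrix.det_of_ite_eq {R α : Type*} [CommRing R] [LinearOrder α] {n : ℕ}
    {k k' : Fin n → α} (hk : StrictAnti k) (hk' : StrictAnti k') (g : α → R) :
    (Matrix.of fun i j => if k i = k' j then g (k i) else 0).det
      = if k = k' then ∏ i, g (k i) else 0 := by
  split_ifs with h
  · subst h
    have hdiag : (Matrix.of fun i j => if k i = k j then g (k i) else 0) = diagonal (g ∘ k) := by
      ext i j
      simp [diagonal_apply, hk.injective.eq_iff]
    rw [hdiag, det_diagonal, Function.comp_def]
  · obtain ⟨i, hi⟩ : ∃ i, ∀ j, k i ≠ k' j := by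
      by_contra! hex
      exact h (hk.eq_of_forall_exists_eq hk' hex)
    exact det_eq_zero_of_row_eq_zero i fun j => if_neg (hi j)

theorem sum_range_cc_mul {N : ℕ} (hN : 0 < N) (f : ℕ → ℝ) :
    ∑ r ∈ range N, cc N r * f r = ∑ r ∈ range N, f r - f 0 / 2 := by
  obtain ⟨m, rfl⟩ := Nat.exists_eq_add_of_lt hN
  have hcc : ∀ r ∈ range m, cc (m + 1) (r + 1) * f (r + 1) = f (r + 1) := fun r hr => by
    rw [cc, if_neg (by simp at hr; omega), one_mul]
  rw [zero_add, sum_range_succ', sum_range_succ', sum_congr rfl hcc, cc, if_pos (Or.inl rfl)]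
  ring

theorem two_mul_sin_mul_sum_cc_mul_cos {N : ℕ} (hN : 0 < N) (α : ℝ) :
    2 * sin α * ∑ r ∈ range N, cc N r * cos (2 * r * α) = sin ((2 * N - 1) * α) := by
  have htelescope : ∀ r : ℕ, 2 * sin α * cos (2 * r * α)
      = sin ((2 * (r + 1 : ℕ) - 1) * α) - sin ((2 * r - 1) * α) := fun r => by
    rw [two_mul_sin_mul_cos]
    push_cast
    rw [show α - 2 * r * α = -((2 * r - 1) * α) by ring, sin_neg]
    ring_nf
  rw [sum_range_cc_mul hN, mul_sub, mul_sum, sum_congr rfl fun r _ => htelescope r,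
    sum_range_sub (fun r : ℕ => sin ((2 * r - 1) * α))]
  simp only [Nat.cast_zero, mul_zero, zero_mul, cos_zero, zero_sub, neg_one_mul, sin_neg]
  ring

theorem sum_cc_mul_cos {N : ℕ} (hN : 0 < N) {m : ℤ} (hm : |m| < 2 * N - 1) :
    ∑ r ∈ range N, cc N r * cos (2 * r * (π * m / (2 * N - 1)))
      = if m = 0 then (2 * N - 1 : ℝ) / 2 else 0 := by
  have hM : (0 : ℝ) < 2 * N - 1 := by
    have : (1 : ℝ) ≤ N := by exact_mod_cast hN
    linarith
  split_ifs with h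
  · subst h
    have hsum := sum_range_cc_mul hN fun _ => 1
    simp only [mul_one, sum_const, card_range, nsmul_eq_mul] at hsum
    simp only [Int.cast_zero, mul_zero, zero_div, cos_zero, mul_one, hsum]
    ring
  · have hsin : sin (π * m / (2 * N - 1)) ≠ 0 := by
      rw [Ne, sin_eq_zero_iff]
      rintro ⟨j, hj⟩
      have hjm : (m : ℝ) = j * (2 * N - 1) := by
        field_simp at hj
        linarith [pi_pos]
      have hjm' : m = j * (2 * N - 1) := by exact_mod_cast hjm
      rcases eq_or_ne j 0 with rfl | hj0
      · exact h (by simpa using hjm')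
      · have : 2 * (N : ℤ) - 1 ≤ |m| := by
          rw [hjm', abs_mul, abs_of_pos (by omega : (0 : ℤ) < 2 * N - 1)]
          exact le_mul_of_one_le_left (by omega) (Int.one_le_abs hj0)
        omega
    have h2 := two_mul_sin_mul_sum_cc_mul_cos hN (π * m / (2 * N - 1))
    rw [show (2 * N - 1) * (π * m / (2 * N - 1)) = m * π by field_simp, sin_int_mul_pi] at h2
    simpa [hsin] using h2

theorem sum_cc_mul_cos_mul_cos {N a b : ℕ} (ha : a < N) (hb : b < N) :
    ∑ t : Fin N, cc N t * cos (π * a * (2 * (t : ℕ) / (2 * N - 1)))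
        * cos (π * b * (2 * (t : ℕ) / (2 * N - 1)))
      = if a = b then (cc N a)⁻¹ * ((2 * N - 1) / 4) else 0 := by
  have hN : 0 < N := by omega
  have hprod : ∀ t : ℕ, cc N t * cos (π * a * (2 * t / (2 * N - 1)))
        * cos (π * b * (2 * t / (2 * N - 1)))
      = (cc N t * cos (2 * t * (π * ((a - b : ℤ) : ℝ) / (2 * N - 1)))
        + cc N t * cos (2 * t * (π * ((a + b : ℤ) : ℝ) / (2 * N - 1)))) / 2 := fun t => by
    have h := two_mul_cos_mul_cos (π * a * (2 * t / (2 * N - 1))) (π * b * (2 * t / (2 * N - 1)))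
    push_cast
    rw [show π * a * (2 * t / (2 * N - 1)) - π * b * (2 * t / (2 * N - 1))
        = 2 * t * (π * (a - b) / (2 * N - 1)) by ring,
      show π * a * (2 * t / (2 * N - 1)) + π * b * (2 * t / (2 * N - 1))
        = 2 * t * (π * (a + b) / (2 * N - 1)) by ring] at h
    linear_combination cc N t / 2 * h
  rw [Fin.sum_univ_eq_sum_range (fun t => cc N t * cos (π * a * (2 * t / (2 * N - 1)))
      * cos (π * b * (2 * t / (2 * N - 1)))), sum_congr rfl fun t _ => hprod t, ← sum_div,
    sum_add_distrib, sum_cc_mul_cos hN (by rw [abs_lt]; omega),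
    sum_cc_mul_cos hN (by rw [abs_lt]; omega)]
  rcases eq_or_ne a b with rfl | hab
  · rcases eq_or_ne a 0 with rfl | ha0
    · simp only [CharP.cast_eq_zero, sub_self, ↓reduceIte, add_zero, add_halves, cc, true_or,
        one_div, inv_inv]
      ring
    · simp only [sub_self, ↓reduceIte, add_self_eq_zero, Int.natCast_eq_zero, ha0, add_zero, cc,
        ha.ne, or_self, inv_one, one_mul]
      ring
  · simp [hab, sub_eq_zero]
    omega

theorem cosMinus_eq_det (n : ℕ) (lam x : Fin n → ℝ) :
    cosMinus n lam x = (Matrix.of fun a b => cos (π * lam a * x b)).det := by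
  rw [Matrix.det_apply']
  rfl

theorem AMDCT_V_orthogonality_general (n N : ℕ) (hN : 1 ≤ N)
    (k k' : Fin n → ℕ)
    (hk : ∀ i j : Fin n, i < j → k j < k i) (hkb : ∀ i, k i ≤ N - 1)
    (hk' : ∀ i j : Fin n, i < j → k' j < k' i) (hk'b : ∀ i, k' i ≤ N - 1) :
    ∑ r ∈ Finset.univ.filter
        (fun r : Fin n → Fin N => ∀ i j : Fin n, i < j → (r j : ℕ) < (r i : ℕ)),
      (∏ i : Fin n, cc N (r i)) *
        cosMinus n (fun i => (k i : ℝ))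
          (fun i => 2 * ((r i : ℕ) : ℝ) / (2 * N - 1)) *
        cosMinus n (fun i => (k' i : ℝ))
          (fun i => 2 * ((r i : ℕ) : ℝ) / (2 * N - 1))
      = (∏ i : Fin n, cc N (k i))⁻¹ * ((2 * (N : ℝ) - 1) / 4) ^ n *
          (if k = k' then (1 : ℝ) else 0) := by
  let A : Matrix (Fin n) (Fin N) ℝ :=
    Matrix.of fun i t => cc N t * cos (π * k i * (2 * (t : ℕ) / (2 * N - 1)))
  let B : Matrix (Fin N) (Fin n) ℝ :=
    Matrix.of fun t j => cos (π * k' j * (2 * (t : ℕ) / (2 * N - 1)))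
  have hAB : A * B = Matrix.of fun i j =>
      if k i = k' j then (cc N (k i))⁻¹ * ((2 * N - 1) / 4) else 0 := by
    ext i j
    simp only [A, B, Matrix.mul_apply, Matrix.of_apply]
    exact sum_cc_mul_cos_mul_cos (by have := hkb i; omega) (by have := hk'b j; omega)
  calc _ = ∑ s with StrictAnti s, (A.submatrix id s).det * (B.submatrix s id).det := by
        refine sum_congr (by ext s; simp only [mem_filter_univ]; rfl) fun s _ => ?_
        have hA : (A.submatrix id s).det = (∏ i, cc N (s i)) *
            cosMinus n (fun i => (k i : ℝ)) (fun i => 2 * ((s i : ℕ) : ℝ) / (2 * N - 1)) := by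
          rw [cosMinus_eq_det, ← Matrix.det_mul_row]
          rfl
        have hB : (B.submatrix s id).det =
            cosMinus n (fun i => (k' i : ℝ)) (fun i => 2 * ((s i : ℕ) : ℝ) / (2 * N - 1)) := by
          rw [cosMinus_eq_det, ← Matrix.det_transpose]
          rfl
        rw [hA, hB, mul_assoc]
    _ = (A * B).det := (Matrix.det_mul_eq_sum_strictAnti A B).symm
    _ = _ := by
        rw [hAB, Matrix.det_of_ite_eq (fun i j h => hk i j h) (fun i j h => hk' i j h)
          (fun a => (cc N a)⁻¹ * ((2 * N - 1) / 4))]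
        split_ifs
        · rw [prod_mul_distrib, prod_inv_distrib, prod_const, card_univ, Fintype.card_fin, mul_one]
        · rw [mul_zero]

theorem AMDCT_V_orthogonality (n N : ℕ) (hn : 1 ≤ n) (hN : 1 ≤ N)
    (k k' : Fin n → ℕ)
    (hk : ∀ i j : Fin n, i < j → k j < k i) (hkb : ∀ i, k i ≤ N - 1)
    (hk' : ∀ i j : Fin n, i < j → k' j < k' i) (hk'b : ∀ i, k' i ≤ N - 1) :
    ∑ r ∈ Finset.univ.filter
        (fun r : Fin n → Fin N => ∀ i j : Fin n, i < j → (r j : ℕ) < (r i : ℕ)),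
      (∏ i : Fin n, cc N (r i)) *
        cosMinus n (fun i => (k i : ℝ))
          (fun i => 2 * ((r i : ℕ) : ℝ) / (2 * N - 1)) *
        cosMinus n (fun i => (k' i : ℝ))
          (fun i => 2 * ((r i : ℕ) : ℝ) / (2 * N - 1))
      = (∏ i : Fin n, cc N (k i))⁻¹ * ((2 * (N : ℝ) - 1) / 4) ^ n *
          (if k = k' then (1 : ℝ) else 0) :=
  AMDCT_V_orthogonality_general n N hN k k' hk hkb hk' hk'b
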